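/- Let κ ∈ ℝ and let μ : ℝ² → ℝ be locally integrable and anti-symmetric with respect to the line α + β = κ, i.e. μ(α,β) = −μ(κ − β, κ − α) for all (α,β) with α > β. Then for every b₀ ≤ κ/2, setting a₀ := κ − b₀, one has ∬_{T(b₀,a₀)} μ(α,β)·(α − β) dα dβ = 0. Hence the major hysteresis loop of the Preisach operator with weighting μ generated by a periodic input whose minimum b₀ and maximum a₀ satisfy a₀ + b₀ = κ encloses zero signed area, so this Preisach operator is a butterfly hysteresis operator. -/

import Mathlib

/-!
The reflection `(α, β) ↦ (κ - β, κ - α)` across `α + β = κ` preserves Lebesgue measure,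
maps `T(b₀, κ - b₀)` onto itself, and changes the sign of `μ(α, β)(α - β)` there
(on the diagonal `α = β` the factor `α - β` vanishes), so the integral equals its own
negative.
-/

open MeasureTheory

/-- The triangular subregion `T(b₀,a₀) = {(α,β) : b₀ ≤ β ≤ α ≤ a₀}` of the
Preisach plane (points are `p = (α, β)`). -/
def preisachTriangle (b₀ a₀ : ℝ) : Set (ℝ × ℝ) :=
  {p : ℝ × ℝ | b₀ ≤ p.2 ∧ p.2 ≤ p.1 ∧ p.1 ≤ a₀}

theorem setIntegral_eq_zero_of_comp_eq_neg {X E : Type*} [MeasurableSpace X]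
    [NormedAddCommGroup E] [NormedSpace ℝ E] {μ : Measure X} {f : X → X} {g : X → E}
    {s : Set X} (hf : MeasurePreserving f μ μ) (hf' : MeasurableEmbedding f)
    (hs : MeasurableSet s) (hfs : f ⁻¹' s = s) (hg : ∀ x ∈ s, g (f x) = -g x) :
    ∫ x in s, g x ∂μ = 0 := by
  have h : ∫ x in s, g x ∂μ = -∫ x in s, g x ∂μ :=
    calc ∫ x in s, g x ∂μ
        = ∫ x in f ⁻¹' s, g (f x) ∂μ := (hf.setIntegral_preimage_emb hf' g s).symm
      _ = ∫ x in s, -g x ∂μ := by rw [hfs]; exact setIntegral_congr_fun hs hg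
      _ = -∫ x in s, g x ∂μ := integral_neg g
  have := IsAddTorsionFree.of_isTorsionFree ℝ E
  exact self_eq_neg.mp h

theorem measurableSet_preisachTriangle (b₀ a₀ : ℝ) : MeasurableSet (preisachTriangle b₀ a₀) :=
  ((measurableSet_le measurable_const measurable_snd).inter
    ((measurableSet_le measurable_snd measurable_fst).inter
      (measurableSet_le measurable_fst measurable_const)))

def preisachReflection (κ : ℝ) : ℝ × ℝ ≃ᵐ ℝ × ℝ :=
  MeasurableEquiv.ofInvolutive (fun p => (κ - p.2, κ - p.1)) (fun p => by simp) (by fun_prop)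

@[simp]
theorem preisachReflection_apply (κ : ℝ) (p : ℝ × ℝ) :
    preisachReflection κ p = (κ - p.2, κ - p.1) :=
  rfl

theorem measurePreserving_preisachReflection (κ : ℝ) :
    MeasurePreserving (preisachReflection κ) volume volume := by
  have h := ((Measure.measurePreserving_sub_left volume κ).prod
    (Measure.measurePreserving_sub_left volume κ)).comp
    (Measure.measurePreserving_swap (μ := (volume : Measure ℝ)) (ν := volume))
  rw [← Measure.volume_eq_prod] at h
  exact h

theorem preisachReflection_preimage_preisachTriangle (κ b₀ a₀ : ℝ) :
    preisachReflection κ ⁻¹' preisachTriangle b₀ a₀ = preisachTriangle (κ - a₀) (κ - b₀) := by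
  ext ⟨α, β⟩
  simp only [Set.mem_preimage, preisachReflection_apply, preisachTriangle, Set.mem_ofPred_eq]
  constructor <;> rintro ⟨h₁, h₂, h₃⟩ <;> exact ⟨by linarith, by linarith, by linarith⟩

theorem weight_preisachReflection_eq_neg {κ : ℝ} {μ : ℝ × ℝ → ℝ}
    (hanti : ∀ α β : ℝ, β < α → μ (α, β) = -μ (κ - β, κ - α)) {p : ℝ × ℝ} (hp : p.2 ≤ p.1) :
    μ (preisachReflection κ p) * ((preisachReflection κ p).1 - (preisachReflection κ p).2) =
      -(μ p * (p.1 - p.2)) := by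
  obtain ⟨α, β⟩ := p
  rcases hp.eq_or_lt with h | h
  · obtain rfl : β = α := h
    simp
  · simp only [preisachReflection_apply, hanti α β h]
    ring

theorem antisymmetric_weight_zero_signed_area_general
    (κ : ℝ) (μ : ℝ × ℝ → ℝ)
    (hanti : ∀ α β : ℝ, β < α → μ (α, β) = -μ (κ - β, κ - α)) :
    ∀ b₀ : ℝ, b₀ ≤ κ / 2 →
      (∫ p in preisachTriangle b₀ (κ - b₀), μ p * (p.1 - p.2)) = 0 := by
  intro b₀ _
  refine setIntegral_eq_zero_of_comp_eq_neg (measurePreserving_preisachReflection κ)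
    (preisachReflection κ).measurableEmbedding (measurableSet_preisachTriangle _ _) ?_ ?_
  · rw [preisachReflection_preimage_preisachTriangle, sub_sub_cancel]
  · rintro p ⟨-, hp, -⟩
    exact weight_preisachReflection_eq_neg hanti hp

theorem antisymmetric_weight_zero_signed_area
    (κ : ℝ) (μ : ℝ × ℝ → ℝ)
    (hloc : LocallyIntegrable μ volume)
    (hanti : ∀ α β : ℝ, β < α → μ (α, β) = -μ (κ - β, κ - α)) :
    ∀ b₀ : ℝ, b₀ ≤ κ / 2 →
      (∫ p in preisachTriangle b₀ (κ - b₀), μ p * (p.1 - p.2)) = 0 :=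
  antisymmetric_weight_zero_signed_area_general κ μ hanti
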